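/- Let α₀ ∈ ℝ∖{0} and ω > 0, and let p ∈ ℂ with Re(p) < 0 and Im(p) ∈ [0,ω] be such that log(p + iωn) + 4πβ₀ ≠ 0 for all n ∈ ℤ. If ξ = (ξₙ)_{n∈ℤ} ∈ ℓ²(ℤ;ℂ) is not identically zero and satisfies ξₙ = −α₀ h(p + iωn)(ξ_{n+1} − ξ_{n−1}) for every n ∈ ℤ, then ξₙ ≠ 0 for every n ∈ ℤ. -/

import Mathlib

open MeasureTheory

/-- `β₀ := (γ - log 2)/(2π) - i/8`, with `γ` the Euler–Mascheroni constant. -/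
noncomputable def beta0 : ℂ :=
  (((Real.eulerMascheroniConstant - Real.log 2) / (2 * Real.pi) : ℝ) : ℂ) - Complex.I / 8

/-- `h(z) := 2πi / (log z + 4πβ₀)`, with the principal branch of the complex logarithm. -/
noncomputable def hfun (z : ℂ) : ℂ :=
  2 * (Real.pi : ℂ) * Complex.I / (Complex.log z + 4 * (Real.pi : ℂ) * beta0)

/-! Write the recurrence as `ξ (n + 1) - ξ (n - 1) = c n * ξ n` with
`c n = I * (log (z n) + 4πβ₀) / (2πα₀)` and `z n = p + iωn`. The flux
`F n = α₀ * Re (ξ (n + 1) * conj (ξ n))` then has increments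
`F n - F (n - 1) = -Im (log (z n) + 4πβ₀) / (2π) * |ξ n|²`, and
`Im (log z + 4πβ₀) = arg z - π/2` is positive if `Im z ≥ 0` and negative if `Im z < 0`, since
`Re z < 0`. As `Im (z n)` increases with `n`, `F` first increases and then decreases; it tends to
`0` at `±∞` because `ξ ∈ ℓ²`, so `F ≥ 0`. A zero `ξ n₀ = 0` gives `F n₀ = F (n₀ - 1) = 0`, which
forces a neighbouring entry to vanish too, and two consecutive zeros propagate through the
recurrence to `ξ = 0`. -/

open Filter Topology ComplexConjugate Complex

lemma Memℓp.tendsto_cofinite_zero {α E : Type*} [NormedAddCommGroup E]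
    {f : α → E} {p : ENNReal} (hf : Memℓp f p) (hp : 0 < p.toReal) :
    Tendsto f cofinite (𝓝 0) := by
  have h := ((hf.summable hp).tendsto_cofinite_zero).rpow_const (p := p.toReal⁻¹) (by simp)
  rw [Real.zero_rpow (inv_ne_zero hp.ne')] at h
  refine tendsto_zero_iff_norm_tendsto_zero.2 (h.congr fun i => ?_)
  exact Real.rpow_rpow_inv (norm_nonneg _) hp.ne'

lemma Int.nonneg_of_unimodal_of_tendsto_cofinite_zero {F : ℤ → ℝ} {P : ℤ → Prop}
    (hP : Monotone P) (hF : Tendsto F cofinite (𝓝 0))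
    (hdec : ∀ n, P n → F n ≤ F (n - 1)) (hinc : ∀ n, ¬P n → F (n - 1) ≤ F n) (n : ℤ) :
    0 ≤ F n := by
  rw [Int.cofinite_eq] at hF
  by_cases h : P (n + 1)
  · have : ∀ k ≥ n, F k ≤ F n := by
      intro k hk
      induction k, hk using Int.leInduction with
      | base => exact le_rfl
      | succ k hk ih => simpa using (hdec (k + 1) (hP (by omega) h)).trans (by simpa using ih)
    exact le_of_tendsto (hF.mono_left le_sup_right) (eventually_atTop.2 ⟨n, this⟩)
  · have : ∀ k ≤ n, F k ≤ F n := by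
      intro k hk
      induction k, hk using Int.leInductionDown with
      | base => exact le_rfl
      | pred k hk ih => exact (hinc k fun hk' => h (hP (by omega) hk')).trans ih
    exact le_of_tendsto (hF.mono_left le_sup_left) (eventually_atBot.2 ⟨n, this⟩)

lemma eq_zero_of_apply_eq_zero_of_apply_add_one_eq_zero {ξ c : ℤ → ℂ}
    (hrec : ∀ n, ξ (n + 1) - ξ (n - 1) = c n * ξ n) {m : ℤ} (h₀ : ξ m = 0)
    (h₁ : ξ (m + 1) = 0) : ξ = 0 := by
  have key : ∀ n, ξ n = 0 ∧ ξ (n + 1) = 0 := by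
    intro n
    refine Int.inductionOn' n m ⟨h₀, h₁⟩ (fun k _ ih => ⟨ih.2, ?_⟩) (fun k _ ih => ⟨?_, ?_⟩)
    · simpa [ih.1, ih.2] using hrec (k + 1)
    · simpa [ih.1, ih.2] using hrec k
    · simpa using ih.1
  exact funext fun n => (key n).1

def discreteFlux (ξ : ℤ → ℂ) (n : ℤ) : ℝ := (ξ (n + 1) * conj (ξ n)).re

lemma discreteFlux_sub_discreteFlux_sub_one {ξ : ℤ → ℂ} {c : ℂ} {n : ℤ}
    (h : ξ (n + 1) - ξ (n - 1) = c * ξ n) :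
    discreteFlux ξ n - discreteFlux ξ (n - 1) = c.re * normSq (ξ n) := by
  rw [discreteFlux, discreteFlux, sub_add_cancel, eq_add_of_sub_eq h]
  simp only [add_mul, mul_re, mul_im, add_re, conj_re, conj_im, normSq_apply]
  ring

lemma tendsto_discreteFlux {ξ : ℤ → ℂ} (hξ : Tendsto ξ cofinite (𝓝 0)) :
    Tendsto (discreteFlux ξ) cofinite (𝓝 0) := by
  have hshift : Tendsto (fun n => ξ (n + 1)) cofinite (𝓝 0) :=
    hξ.comp (add_left_injective 1).tendsto_cofinite
  have h := (continuous_re.tendsto _).comp (hshift.mul hξ.star)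
  rwa [star_zero, mul_zero, zero_re] at h

lemma eq_zero_of_tendsto_zero_of_apply_eq_zero {ξ c : ℤ → ℂ} {a : ℝ} {P : ℤ → Prop}
    (hP : Monotone P) (hrec : ∀ n, ξ (n + 1) - ξ (n - 1) = c n * ξ n)
    (hξ : Tendsto ξ cofinite (𝓝 0)) (hc_neg : ∀ n, P n → a * (c n).re < 0)
    (hc_pos : ∀ n, ¬P n → 0 < a * (c n).re) {n₀ : ℤ} (hn₀ : ξ n₀ = 0) : ξ = 0 := by
  set F : ℤ → ℝ := fun n => a * discreteFlux ξ n
  have hstep (n : ℤ) : F n - F (n - 1) = a * (c n).re * normSq (ξ n) := by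
    simp only [F, ← mul_sub, discreteFlux_sub_discreteFlux_sub_one (hrec n), mul_assoc]
  have hF_nonneg : ∀ n, 0 ≤ F n :=
    Int.nonneg_of_unimodal_of_tendsto_cofinite_zero hP
      (by simpa using (tendsto_discreteFlux hξ).const_mul a)
      (fun n hn => by nlinarith [hstep n, hc_neg n hn, normSq_nonneg (ξ n)])
      (fun n hn => by nlinarith [hstep n, hc_pos n hn, normSq_nonneg (ξ n)])
  have hF₀ : F n₀ = 0 := by simp [F, discreteFlux, hn₀]
  have hF₁ : F (n₀ - 1) = 0 := by simp [F, discreteFlux, hn₀]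
  by_cases h : P (n₀ + 1)
  · refine eq_zero_of_apply_eq_zero_of_apply_add_one_eq_zero hrec hn₀ (normSq_eq_zero.1 ?_)
    have hstep₁ := hstep (n₀ + 1)
    rw [add_sub_cancel_right, hF₀, sub_zero] at hstep₁
    nlinarith [hF_nonneg (n₀ + 1), hc_neg _ h, normSq_nonneg (ξ (n₀ + 1))]
  · have h' : ¬P (n₀ - 1) := fun h' => h (hP (by omega) h')
    refine eq_zero_of_apply_eq_zero_of_apply_add_one_eq_zero hrec (m := n₀ - 1)
      (normSq_eq_zero.1 ?_) (by rwa [sub_add_cancel])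
    have hstep₁ := hstep (n₀ - 1)
    rw [hF₁] at hstep₁
    nlinarith [hF_nonneg (n₀ - 1 - 1), hc_pos _ h', normSq_nonneg (ξ (n₀ - 1))]

lemma beta0_im : beta0.im = -(1 / 8) := by
  simp only [beta0, sub_im, ofReal_im]
  norm_num

lemma im_log_add_four_pi_mul_beta0 (z : ℂ) :
    (log z + 4 * (Real.pi : ℂ) * beta0).im = arg z - Real.pi / 2 := by
  rw [add_im, log_im, ← ofReal_ofNat, ← ofReal_mul, im_ofReal_mul, beta0_im]
  ring

lemma pi_div_two_lt_arg_of_re_neg_of_im_nonneg {z : ℂ} (hre : z.re < 0) (him : 0 ≤ z.im) :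
    Real.pi / 2 < arg z := by
  have h := mt abs_arg_le_pi_div_two_iff.1 hre.not_ge
  rwa [not_le, abs_of_nonneg (arg_nonneg_iff.2 him)] at h

lemma arg_lt_neg_pi_div_two_of_re_neg_of_im_neg {z : ℂ} (hre : z.re < 0) (him : z.im < 0) :
    arg z < -(Real.pi / 2) := by
  have h := mt abs_arg_le_pi_div_two_iff.1 hre.not_ge
  rwa [not_le, abs_of_neg (arg_neg_iff.2 him), lt_neg] at h

lemma sub_eq_mul_of_eq_neg_mul_hfun {z x y : ℂ} {α : ℝ} (hα : α ≠ 0)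
    (hz : log z + 4 * (Real.pi : ℂ) * beta0 ≠ 0) (h : x = -α * hfun z * y) :
    y = I * (log z + 4 * (Real.pi : ℂ) * beta0) / (2 * Real.pi * α) * x := by
  rw [h, hfun]
  have hα' : (α : ℂ) ≠ 0 := ofReal_ne_zero.2 hα
  field_simp
  rw [I_sq]
  field_simp

lemma ofReal_mul_re_I_mul_div {α : ℝ} (hα : α ≠ 0) (w : ℂ) :
    α * (I * w / (2 * Real.pi * α)).re = -(w.im / (2 * Real.pi)) := by
  rw [show (2 * Real.pi * α : ℂ) = ((2 * Real.pi * α : ℝ) : ℂ) by push_cast; ring, div_ofReal_re]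
  simp only [mul_re, I_re, I_im]
  field_simp
  ring

theorem nonzero_solution_has_no_zero_entry (α₀ ω : ℝ) (hα : α₀ ≠ 0) (hω : 0 < ω)
    (p : ℂ) (hre : p.re < 0)
    (hlog : ∀ n : ℤ,
      Complex.log (p + Complex.I * (ω : ℂ) * (n : ℂ)) + 4 * (Real.pi : ℂ) * beta0 ≠ 0)
    (ξ : ℤ → ℂ) (hξ2 : Memℓp ξ 2) (hξ0 : ξ ≠ 0)
    (heq : ∀ n : ℤ, ξ n =
      -(α₀ : ℂ) * hfun (p + Complex.I * (ω : ℂ) * (n : ℂ)) * (ξ (n + 1) - ξ (n - 1))) :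
    ∀ n : ℤ, ξ n ≠ 0 := by
  intro n₀ hn₀
  let z (n : ℤ) : ℂ := p + I * ω * n
  have hz_re (n : ℤ) : (z n).re < 0 := by simpa [z] using hre
  have hz_im (n : ℤ) : (z n).im = p.im + ω * n := by simp [z]
  refine hξ0 <| eq_zero_of_tendsto_zero_of_apply_eq_zero (P := fun n => 0 ≤ (z n).im) (a := α₀)
    ?_ (fun n => sub_eq_mul_of_eq_neg_mul_hfun hα (hlog n) (heq n))
    (hξ2.tendsto_cofinite_zero (by norm_num)) (fun n hn => ?_) (fun n hn => ?_) hn₀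
  · intro m n hmn hm
    simp only [hz_im] at hm ⊢
    nlinarith [(Int.cast_le (R := ℝ)).2 hmn]
  · rw [ofReal_mul_re_I_mul_div hα, im_log_add_four_pi_mul_beta0]
    have := pi_div_two_lt_arg_of_re_neg_of_im_nonneg (hz_re n) hn
    exact neg_neg_of_pos (div_pos (by linarith) (by positivity))
  · rw [ofReal_mul_re_I_mul_div hα, im_log_add_four_pi_mul_beta0, neg_pos]
    have := arg_lt_neg_pi_div_two_of_re_neg_of_im_neg (hz_re n) (not_le.1 hn)
    exact div_neg_of_neg_of_pos (by linarith [Real.pi_pos]) (by positivity)
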